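/- Let W be an n×k matrix of rank k whose columns are orthogonal to span(X, Z), let Y^{⊥zx} := Y − blp(Y|X,Z), and set W̃ := blp(Y^{⊥zx} | columns of W); assume W̃ ≠ 0 and σ_{y·zx} > 0. Then the proportionate reduction in unexplained variance from adding W̃ equals that from adding all of W: ρ²_{yw̃·zx} = ρ²_{yw·zx}, i.e., 1 − σ²_{y·zxw̃}/σ²_{y·zx} = 1 − σ²_{y·zxw}/σ²_{y·zx}. -/

import Mathlib

/-!
`Pyzx + W̃` is a best linear predictor of `Y` both on `span(X, Z, W)` and on `span(X, Z, W̃)`: it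
lies in both spans, and its residual `(Y - Pyzx) - W̃` is orthogonal to `span(X, Z)` (because `W`,
hence `W̃`, is) and to the columns of `W` (by the definition of `W̃`). Residual variances of two
best linear predictors onto the same span coincide, since their difference lies in the span and is
therefore orthogonal to itself.
-/

open scoped BigOperators

/-- Weighted inner product on ℝⁿ: `(A,B) := (∑ i, wᵢ Aᵢ Bᵢ) / (∑ i, wᵢ)`. -/
noncomputable def wip {n : ℕ} (w A B : Fin n → ℝ) : ℝ :=
  (∑ i, w i * A i * B i) / (∑ i, w i)

/-- `P` is the best linear predictor (orthogonal projection with respect to the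
weighted inner product `wip w`) of `A` onto the span of the collection `C`. -/
def IsBlp {n : ℕ} (w : Fin n → ℝ) (C : Set (Fin n → ℝ)) (A P : Fin n → ℝ) : Prop :=
  P ∈ Submodule.span ℝ C ∧ ∀ v ∈ Submodule.span ℝ C, wip w (A - P) v = 0

noncomputable def wipForm {n : ℕ} (w : Fin n → ℝ) : LinearMap.BilinForm ℝ (Fin n → ℝ) :=
  LinearMap.mk₂ ℝ (wip w)
    (fun _ _ _ => by
      simp only [wip, ← add_div, ← Finset.sum_add_distrib, Pi.add_apply, mul_add, add_mul])
    (fun _ _ _ => by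
      simp only [wip, smul_eq_mul, mul_div_assoc', Finset.mul_sum, Pi.smul_apply, mul_assoc,
        mul_left_comm])
    (fun _ _ _ => by
      simp only [wip, ← add_div, ← Finset.sum_add_distrib, Pi.add_apply, mul_add])
    (fun _ _ _ => by
      simp only [wip, smul_eq_mul, mul_div_assoc', Finset.mul_sum, Pi.smul_apply, mul_assoc,
        mul_left_comm])

@[simp]
lemma wipForm_apply {n : ℕ} (w A B : Fin n → ℝ) : wipForm w A B = wip w A B := rfl

lemma wip_comm {n : ℕ} (w A B : Fin n → ℝ) : wip w A B = wip w B A := by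
  simp only [wip, mul_right_comm]

lemma wip_add_left {n : ℕ} (w A B C : Fin n → ℝ) :
    wip w (A + B) C = wip w A C + wip w B C := by
  simp only [← wipForm_apply, map_add, LinearMap.add_apply]

lemma wip_add_right {n : ℕ} (w A B C : Fin n → ℝ) :
    wip w A (B + C) = wip w A B + wip w A C := by
  simp only [← wipForm_apply, map_add]

lemma wip_sub_left {n : ℕ} (w A B C : Fin n → ℝ) :
    wip w (A - B) C = wip w A C - wip w B C := by
  simp only [← wipForm_apply, map_sub, LinearMap.sub_apply]

lemma wip_eq_zero_of_mem_span {n : ℕ} {w u : Fin n → ℝ} {C : Set (Fin n → ℝ)}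
    (h : ∀ c ∈ C, wip w u c = 0) : ∀ v ∈ Submodule.span ℝ C, wip w u v = 0 :=
  fun _ hv => (Submodule.span_le (p := LinearMap.ker (wipForm w u))).2 h hv

namespace IsBlp

variable {n : ℕ} {w : Fin n → ℝ} {C D : Set (Fin n → ℝ)} {A P Q : Fin n → ℝ}

lemma wip_residual_eq (hP : IsBlp w C A P) (hQ : IsBlp w C A Q) :
    wip w (A - P) (A - P) = wip w (A - Q) (A - Q) := by
  have hPQ : P - Q ∈ Submodule.span ℝ C := sub_mem hP.1 hQ.1
  have hP_orth : wip w (A - P) (P - Q) = 0 := hP.2 _ hPQ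
  have hQ_orth : wip w (A - Q) (P - Q) = 0 := hQ.2 _ hPQ
  have hAQ : A - Q = (A - P) + (P - Q) := by abel
  have hPQ_sq : wip w (P - Q) (P - Q) = 0 := by
    rwa [hAQ, wip_add_left, hP_orth, zero_add] at hQ_orth
  rw [hAQ, wip_add_left, wip_add_right, wip_add_right, wip_comm w (P - Q) (A - P), hP_orth,
    hPQ_sq, add_zero, add_zero, add_zero]

lemma of_span_le (hP : IsBlp w C A P) (hmem : P ∈ Submodule.span ℝ D)
    (hle : Submodule.span ℝ D ≤ Submodule.span ℝ C) : IsBlp w D A P :=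
  ⟨hmem, fun v hv => hP.2 v (hle hv)⟩

lemma add_of_orthogonal (hP : IsBlp w C A P) (hQ : IsBlp w D (A - P) Q)
    (hDC : ∀ d ∈ D, ∀ c ∈ C, wip w d c = 0) : IsBlp w (C ∪ D) A (P + Q) := by
  refine ⟨add_mem (Submodule.span_mono Set.subset_union_left hP.1)
    (Submodule.span_mono Set.subset_union_right hQ.1), wip_eq_zero_of_mem_span ?_⟩
  have hresid : A - (P + Q) = (A - P) - Q := by abel
  rintro v (hvC | hvD)
  · have hQv : wip w Q v = 0 := by
      rw [wip_comm]
      exact wip_eq_zero_of_mem_span (fun d hd => by rw [wip_comm]; exact hDC d hd v hvC) Q hQ.1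
    rw [hresid, wip_sub_left, hP.2 v (Submodule.subset_span hvC), hQv, sub_zero]
  · rw [hresid]
    exact hQ.2 v (Submodule.subset_span hvD)

end IsBlp

theorem stmt10_general {n k : ℕ} (w : Fin n → ℝ)
    (X : Set (Fin n → ℝ))
    (Y Z : Fin n → ℝ) (W : Fin k → (Fin n → ℝ))
    (hWorth : ∀ i, ∀ v ∈ Submodule.span ℝ (insert Z X), wip w (W i) v = 0)
    (Pyzx Wt Pyzxw Pyzxwt : Fin n → ℝ)
    (hPyzx : IsBlp w (insert Z X) Y Pyzx)
    (hWt : IsBlp w (Set.range W) (Y - Pyzx) Wt)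
    (hPyzxw : IsBlp w (insert Z X ∪ Set.range W) Y Pyzxw)
    (hPyzxwt : IsBlp w (insert Wt (insert Z X)) Y Pyzxwt) :
    1 - wip w (Y - Pyzxwt) (Y - Pyzxwt) / wip w (Y - Pyzx) (Y - Pyzx)
      = 1 - wip w (Y - Pyzxw) (Y - Pyzxw) / wip w (Y - Pyzx) (Y - Pyzx) := by
  set ZX := insert Z X
  have hsumW : IsBlp w (ZX ∪ Set.range W) Y (Pyzx + Wt) :=
    hPyzx.add_of_orthogonal hWt <| by
      rintro _ ⟨i, rfl⟩ c hc
      exact hWorth i c (Submodule.subset_span hc)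
  have hWt_span : Submodule.span ℝ (insert Wt ZX) ≤ Submodule.span ℝ (ZX ∪ Set.range W) :=
    Submodule.span_le.2 <| Set.insert_subset_iff.2
      ⟨Submodule.span_mono Set.subset_union_right hWt.1,
        Set.subset_union_left.trans Submodule.subset_span⟩
  have hsumWt : IsBlp w (insert Wt ZX) Y (Pyzx + Wt) :=
    hsumW.of_span_le (add_mem (Submodule.span_mono (Set.subset_insert _ _) hPyzx.1)
      (Submodule.subset_span (Set.mem_insert _ _))) hWt_span
  rw [hPyzxwt.wip_residual_eq hsumWt, hPyzxw.wip_residual_eq hsumW]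

/-- Lemma, part 1: for an `n×k` matrix `W` of rank `k` whose columns
are orthogonal to `span(X,Z)`, with `W̃ := blp(Y^{⊥zx} | columns of W) ≠ 0` and
`σ_{y·zx} > 0`, the proportionate reduction in unexplained variance from adding `W̃`
equals that from adding all of `W`:
`1 − σ²_{y·zxw̃}/σ²_{y·zx} = 1 − σ²_{y·zxw}/σ²_{y·zx}`. -/
theorem stmt10 {n k : ℕ} (w : Fin n → ℝ) (hw : ∀ i, 0 < w i)
    (X : Set (Fin n → ℝ)) (hXfin : X.Finite)
    (h1 : (fun _ => (1 : ℝ)) ∈ Submodule.span ℝ X)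
    (Y Z : Fin n → ℝ) (W : Fin k → (Fin n → ℝ))
    (hWrank : LinearIndependent ℝ W)
    (hWorth : ∀ i, ∀ v ∈ Submodule.span ℝ (insert Z X), wip w (W i) v = 0)
    (Pyzx Wt Pyzxw Pyzxwt : Fin n → ℝ)
    (hPyzx : IsBlp w (insert Z X) Y Pyzx)
    (hWt : IsBlp w (Set.range W) (Y - Pyzx) Wt)
    (hWtne : Wt ≠ 0)
    (hPyzxw : IsBlp w (insert Z X ∪ Set.range W) Y Pyzxw)
    (hPyzxwt : IsBlp w (insert Wt (insert Z X)) Y Pyzxwt)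
    (hσyzx : 0 < wip w (Y - Pyzx) (Y - Pyzx)) :
    1 - wip w (Y - Pyzxwt) (Y - Pyzxwt) / wip w (Y - Pyzx) (Y - Pyzx)
      = 1 - wip w (Y - Pyzxw) (Y - Pyzxw) / wip w (Y - Pyzx) (Y - Pyzx) :=
  stmt10_general w X Y Z W hWorth Pyzx Wt Pyzxw Pyzxwt hPyzx hWt hPyzxw hPyzxwt
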